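/- arXiv:1410.6641 — 2 statements merged into one kernel-verified Lean document; each statement's English description precedes it below -/
import Mathlib

section
/- Let A ⊆ V and x⁰ ∈ X_A, and suppose x⁰ is strongly persistent, i.e. x⁰ is the unique minimizer of the augmented energy Ê_{A,x⁰} over X_A. Then every global minimizer x of the full energy E over X_V satisfies x|_A = x⁰. -/
open Finset

section
variable {V : Type} [Fintype V] [DecidableEq V]
variable {X : V → Type} [∀ v, Fintype (X v)] [∀ v, DecidableEq (X v)] [∀ v, Nonempty (X v)]

/-- Energy of a pairwise graphical model. -/
noncomputable def energy (Ed : Finset (V × V)) (θ1 : ∀ v, X v → ℝ)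
    (θ2 : ∀ u v : V, X u → X v → ℝ) (x : ∀ v, X v) : ℝ :=
  ∑ v, θ1 v (x v) + ∑ e ∈ Ed, θ2 e.1 e.2 (x e.1) (x e.2)

/-- Concatenation of a labeling `x0` on `A` with `x` on the complement. -/
def patch (A : Finset V) (x0 x : ∀ v, X v) : ∀ v, X v :=
  fun v => if v ∈ A then x0 v else x v

/-- Boundary potential for a boundary edge `(u,v)` with `u` inside. -/
noncomputable def bpot (θ2 : ∀ u v : V, X u → X v → ℝ) (u v : V)
    (yu : X u) (xu : X u) : ℝ :=
  if xu = yu then univ.sup' univ_nonempty (fun z => θ2 u v xu z)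
  else univ.inf' univ_nonempty (fun z => θ2 u v xu z)

/-- Boundary potential for a boundary edge `(u,v)` with `v` inside. -/
noncomputable def bpot' (θ2 : ∀ u v : V, X u → X v → ℝ) (u v : V)
    (yv : X v) (xv : X v) : ℝ :=
  if xv = yv then univ.sup' univ_nonempty (fun z => θ2 u v z xv)
  else univ.inf' univ_nonempty (fun z => θ2 u v z xv)

/-- Augmented ("boundary") energy `Ê_{A,y}` with test labeling `y`. -/
noncomputable def augEnergy (Ed : Finset (V × V)) (θ1 : ∀ v, X v → ℝ)
    (θ2 : ∀ u v : V, X u → X v → ℝ) (A : Finset V) (y x : ∀ v, X v) : ℝ :=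
  (∑ v ∈ A, θ1 v (x v)
    + ∑ e ∈ Ed.filter (fun e => e.1 ∈ A ∧ e.2 ∈ A), θ2 e.1 e.2 (x e.1) (x e.2))
  + ∑ e ∈ Ed.filter (fun e => e.1 ∈ A ∧ e.2 ∉ A), bpot θ2 e.1 e.2 (y e.1) (x e.1)
  + ∑ e ∈ Ed.filter (fun e => e.1 ∉ A ∧ e.2 ∈ A), bpot' θ2 e.1 e.2 (y e.2) (x e.2)

lemma key_ineq (Ed : Finset (V × V)) (θ1 : ∀ v, X v → ℝ) (θ2 : ∀ u v : V, X u → X v → ℝ)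
    (A : Finset V) (x0 x : ∀ v, X v) :
    energy Ed θ1 θ2 (patch A x0 x) + augEnergy Ed θ1 θ2 A x0 x
      ≤ energy Ed θ1 θ2 x + augEnergy Ed θ1 θ2 A x0 x0 := by
  -- unary part (an equality)
  have hun : ∑ v, θ1 v (patch A x0 x v) + ∑ v ∈ A, θ1 v (x v)
      = ∑ v, θ1 v (x v) + ∑ v ∈ A, θ1 v (x0 v) := by
    have hA : ∀ (f : ∀ v, X v),
        ∑ v ∈ A, θ1 v (f v) = ∑ v, if v ∈ A then θ1 v (f v) else 0 := by
      intro f; rw [Finset.sum_ite_mem, univ_inter]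
    rw [hA x, hA x0, ← Finset.sum_add_distrib, ← Finset.sum_add_distrib]
    apply Finset.sum_congr rfl
    intro v _
    by_cases hv : v ∈ A <;> simp [patch, hv, add_comm]
  -- pairwise part
  have hpair : ∀ (z : ∀ v, X v),
      (∑ e ∈ Ed.filter (fun e => e.1 ∈ A ∧ e.2 ∈ A), θ2 e.1 e.2 (z e.1) (z e.2))
      + (∑ e ∈ Ed.filter (fun e => e.1 ∈ A ∧ e.2 ∉ A), bpot θ2 e.1 e.2 (x0 e.1) (z e.1))
      + (∑ e ∈ Ed.filter (fun e => e.1 ∉ A ∧ e.2 ∈ A), bpot' θ2 e.1 e.2 (x0 e.2) (z e.2))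
      = ∑ e ∈ Ed, ((if e.1 ∈ A ∧ e.2 ∈ A then θ2 e.1 e.2 (z e.1) (z e.2) else 0)
          + (if e.1 ∈ A ∧ e.2 ∉ A then bpot θ2 e.1 e.2 (x0 e.1) (z e.1) else 0)
          + (if e.1 ∉ A ∧ e.2 ∈ A then bpot' θ2 e.1 e.2 (x0 e.2) (z e.2) else 0)) := by
    intro z
    rw [Finset.sum_filter, Finset.sum_filter, Finset.sum_filter,
      ← Finset.sum_add_distrib, ← Finset.sum_add_distrib]
  have hpe : ∑ e ∈ Ed, θ2 e.1 e.2 (patch A x0 x e.1) (patch A x0 x e.2)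
      + ∑ e ∈ Ed, ((if e.1 ∈ A ∧ e.2 ∈ A then θ2 e.1 e.2 (x e.1) (x e.2) else 0)
          + (if e.1 ∈ A ∧ e.2 ∉ A then bpot θ2 e.1 e.2 (x0 e.1) (x e.1) else 0)
          + (if e.1 ∉ A ∧ e.2 ∈ A then bpot' θ2 e.1 e.2 (x0 e.2) (x e.2) else 0))
      ≤ ∑ e ∈ Ed, θ2 e.1 e.2 (x e.1) (x e.2)
      + ∑ e ∈ Ed, ((if e.1 ∈ A ∧ e.2 ∈ A then θ2 e.1 e.2 (x0 e.1) (x0 e.2) else 0)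
          + (if e.1 ∈ A ∧ e.2 ∉ A then bpot θ2 e.1 e.2 (x0 e.1) (x0 e.1) else 0)
          + (if e.1 ∉ A ∧ e.2 ∈ A then bpot' θ2 e.1 e.2 (x0 e.2) (x0 e.2) else 0)) := by
    rw [← Finset.sum_add_distrib, ← Finset.sum_add_distrib]
    apply Finset.sum_le_sum
    rintro ⟨u, w⟩ _
    simp only [patch]
    by_cases hu : u ∈ A <;> by_cases hw : w ∈ A
    · simp only [hu, hw, if_true, and_self, and_true, true_and, not_true,
        and_false, false_and, if_false]
      exact le_of_eq (by ring)
    · simp only [hu, hw, if_true, if_false, and_true, and_false, true_and,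
        not_false_iff, not_true, false_and, and_self, if_pos, if_neg,
        add_zero, zero_add]
      by_cases hx : x u = x0 u
      · rw [bpot, bpot, if_pos hx, if_pos rfl, hx]
      · rw [bpot, bpot, if_neg hx, if_pos rfl]
        have h1 : θ2 u w (x0 u) (x w) ≤ univ.sup' univ_nonempty (fun z => θ2 u w (x0 u) z) :=
          Finset.le_sup' _ (mem_univ (x w))
        have h2 : univ.inf' univ_nonempty (fun z => θ2 u w (x u) z) ≤ θ2 u w (x u) (x w) :=
          Finset.inf'_le _ (mem_univ (x w))
        linarith
    · simp only [hu, hw, if_true, if_false, and_true, and_false, true_and,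
        not_false_iff, not_true, false_and, and_self, if_pos, if_neg,
        add_zero, zero_add]
      by_cases hx : x w = x0 w
      · rw [bpot', bpot', if_pos hx, if_pos rfl, hx]
      · rw [bpot', bpot', if_neg hx, if_pos rfl]
        have h1 : θ2 u w (x u) (x0 w) ≤ univ.sup' univ_nonempty (fun z => θ2 u w z (x0 w)) :=
          Finset.le_sup' (fun z => θ2 u w z (x0 w)) (mem_univ (x u))
        have h2 : univ.inf' univ_nonempty (fun z => θ2 u w z (x w)) ≤ θ2 u w (x u) (x w) :=
          Finset.inf'_le _ (mem_univ (x u))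
        linarith
    · simp [hu, hw]
  unfold energy augEnergy
  linarith [hpair x, hpair x0, hun, hpe]

/-- Lemma "StrongPersistencyUniqueGlobalOptimum": a strongly persistent labeling
agrees with every global minimizer of the energy on its domain. -/
theorem strong_persistency_unique_global_optimum
    (Ed : Finset (V × V)) (θ1 : ∀ v, X v → ℝ) (θ2 : ∀ u v : V, X u → X v → ℝ)
    (A : Finset V) (x0 : ∀ v, X v)
    (hmin : ∀ x : ∀ v, X v,
      augEnergy Ed θ1 θ2 A x0 x0 ≤ augEnergy Ed θ1 θ2 A x0 x)
    (huniq : ∀ x : ∀ v, X v,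
      (∀ z : ∀ v, X v, augEnergy Ed θ1 θ2 A x0 x ≤ augEnergy Ed θ1 θ2 A x0 z) →
        ∀ v ∈ A, x v = x0 v) :
    ∀ x : ∀ v, X v, (∀ y, energy Ed θ1 θ2 x ≤ energy Ed θ1 θ2 y) →
      ∀ v ∈ A, x v = x0 v := by
  intro x hx
  apply huniq
  intro z
  have h1 := key_ineq Ed θ1 θ2 A x0 x
  have h2 := hx (patch A x0 x)
  have h3 := hmin z
  linarith


end
end

section
/- (Monotonicity of persistency under nesting.) Let A ⊆ B ⊆ V, let x^A ∈ X_A be strongly persistent for the subproblem on A (i.e. the unique minimizer of Ê_{A,x^A} over X_A), and let y^B ∈ X_B be a test labeling with y^B|_A = x^A. Then every minimizer x of Ê_{B,y^B} over X_B satisfies x|_A = x^A. -/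
open Finset

section
variable {V : Type} [Fintype V] [DecidableEq V]
variable {X : V → Type} [∀ v, Fintype (X v)] [∀ v, DecidableEq (X v)] [∀ v, Nonempty (X v)]

/-- Per-edge contribution to the augmented energy. -/
noncomputable def gedge (θ2 : ∀ u v : V, X u → X v → ℝ) (S : Finset V)
    (y x : ∀ v, X v) (e : V × V) : ℝ :=
  (if e.1 ∈ S ∧ e.2 ∈ S then θ2 e.1 e.2 (x e.1) (x e.2) else 0)
  + (if e.1 ∈ S ∧ e.2 ∉ S then bpot θ2 e.1 e.2 (y e.1) (x e.1) else 0)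
  + (if e.1 ∉ S ∧ e.2 ∈ S then bpot' θ2 e.1 e.2 (y e.2) (x e.2) else 0)

lemma augEnergy_eq_gedge (Ed : Finset (V × V)) (θ1 : ∀ v, X v → ℝ)
    (θ2 : ∀ u v : V, X u → X v → ℝ) (S : Finset V) (y x : ∀ v, X v) :
    augEnergy Ed θ1 θ2 S y x
      = ∑ v ∈ S, θ1 v (x v) + ∑ e ∈ Ed, gedge θ2 S y x e := by
  unfold augEnergy gedge
  rw [Finset.sum_add_distrib, Finset.sum_add_distrib,
    ← Finset.sum_filter, ← Finset.sum_filter, ← Finset.sum_filter]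
  ring

lemma bpot_key (θ2 : ∀ u v : V, X u → X v → ℝ) (u v : V) (a c : X u) (w : X v) :
    θ2 u v a w + bpot θ2 u v a c ≤ θ2 u v c w + bpot θ2 u v a a := by
  unfold bpot
  rw [if_pos rfl]
  by_cases h : c = a
  · subst h; rw [if_pos rfl]
  · rw [if_neg h]
    have h1 : θ2 u v a w ≤ univ.sup' univ_nonempty (fun z => θ2 u v a z) :=
      Finset.le_sup' _ (mem_univ w)
    have h2 : univ.inf' univ_nonempty (fun z => θ2 u v c z) ≤ θ2 u v c w :=
      Finset.inf'_le _ (mem_univ w)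
    linarith

lemma bpot'_key (θ2 : ∀ u v : V, X u → X v → ℝ) (u v : V) (a c : X v) (w : X u) :
    θ2 u v w a + bpot' θ2 u v a c ≤ θ2 u v w c + bpot' θ2 u v a a := by
  unfold bpot'
  rw [if_pos rfl]
  by_cases h : c = a
  · subst h; rw [if_pos rfl]
  · rw [if_neg h]
    have h1 : θ2 u v w a ≤ univ.sup' univ_nonempty (fun z => θ2 u v z a) :=
      Finset.le_sup' (fun z => θ2 u v z a) (mem_univ w)
    have h2 : univ.inf' univ_nonempty (fun z => θ2 u v z c) ≤ θ2 u v w c :=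
      Finset.inf'_le _ (mem_univ w)
    linarith

lemma gedge_key (θ2 : ∀ u v : V, X u → X v → ℝ) {A B : Finset V} (hAB : A ⊆ B)
    (xA yB x : ∀ v, X v) (hagree : ∀ v ∈ A, yB v = xA v) (e : V × V) :
    gedge θ2 B yB (patch A xA x) e + gedge θ2 A xA x e
      ≤ gedge θ2 B yB x e + gedge θ2 A xA (patch A xA x) e := by
  by_cases h1 : e.1 ∈ A <;> by_cases h2 : e.2 ∈ A <;>
    by_cases h3 : e.1 ∈ B <;> by_cases h4 : e.2 ∈ B
  all_goals first
    | exact absurd (hAB h1) h3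
    | exact absurd (hAB h2) h4
    | (simp only [gedge, patch, h1, h2, h3, h4, if_pos, if_neg, if_true, if_false,
        true_and, and_true, false_and, and_false, not_true, not_false_iff,
        ite_true, ite_false]
       first
        | linarith
        | (rw [hagree _ h1]; linarith)
        | (rw [hagree _ h2]; linarith)
        | (have := bpot_key θ2 e.1 e.2 (xA e.1) (x e.1) (x e.2); linarith)
        | (have := bpot'_key θ2 e.1 e.2 (xA e.2) (x e.2) (x e.1); linarith))

lemma augEnergy_patch_self (Ed : Finset (V × V)) (θ1 : ∀ v, X v → ℝ)
    (θ2 : ∀ u v : V, X u → X v → ℝ) (A : Finset V) (xA x : ∀ v, X v) :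
    augEnergy Ed θ1 θ2 A xA (patch A xA x) = augEnergy Ed θ1 θ2 A xA xA := by
  unfold augEnergy
  have e1 : ∑ v ∈ A, θ1 v (patch A xA x v) = ∑ v ∈ A, θ1 v (xA v) :=
    Finset.sum_congr rfl fun v hv => by simp [patch, hv]
  have e2 : ∑ e ∈ Ed.filter (fun e => e.1 ∈ A ∧ e.2 ∈ A),
      θ2 e.1 e.2 (patch A xA x e.1) (patch A xA x e.2)
      = ∑ e ∈ Ed.filter (fun e => e.1 ∈ A ∧ e.2 ∈ A), θ2 e.1 e.2 (xA e.1) (xA e.2) := by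
    refine Finset.sum_congr rfl fun e he => ?_
    obtain ⟨-, h1, h2⟩ := Finset.mem_filter.mp he
    simp [patch, h1, h2]
  have e3 : ∑ e ∈ Ed.filter (fun e => e.1 ∈ A ∧ e.2 ∉ A),
      bpot θ2 e.1 e.2 (xA e.1) (patch A xA x e.1)
      = ∑ e ∈ Ed.filter (fun e => e.1 ∈ A ∧ e.2 ∉ A), bpot θ2 e.1 e.2 (xA e.1) (xA e.1) := by
    refine Finset.sum_congr rfl fun e he => ?_
    obtain ⟨-, h1, -⟩ := Finset.mem_filter.mp he
    simp [patch, h1]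
  have e4 : ∑ e ∈ Ed.filter (fun e => e.1 ∉ A ∧ e.2 ∈ A),
      bpot' θ2 e.1 e.2 (xA e.2) (patch A xA x e.2)
      = ∑ e ∈ Ed.filter (fun e => e.1 ∉ A ∧ e.2 ∈ A), bpot' θ2 e.1 e.2 (xA e.2) (xA e.2) := by
    refine Finset.sum_congr rfl fun e he => ?_
    obtain ⟨-, -, h2⟩ := Finset.mem_filter.mp he
    simp [patch, h2]
  rw [e1, e2, e3, e4]

/-- Lemma "PersistentLabelingDuringIterations" (combinatorial analogue):
strong persistency on `A ⊆ B` forces every minimizer of `Ê_{B,y^B}` to agree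
with `x^A` on `A`, provided `y^B` agrees with `x^A` on `A`. -/
theorem persistent_labeling_during_iterations
    (Ed : Finset (V × V)) (θ1 : ∀ v, X v → ℝ) (θ2 : ∀ u v : V, X u → X v → ℝ)
    (A B : Finset V) (hAB : A ⊆ B) (xA yB : ∀ v, X v)
    (hmin : ∀ x : ∀ v, X v,
      augEnergy Ed θ1 θ2 A xA xA ≤ augEnergy Ed θ1 θ2 A xA x)
    (huniq : ∀ x : ∀ v, X v,
      (∀ z : ∀ v, X v, augEnergy Ed θ1 θ2 A xA x ≤ augEnergy Ed θ1 θ2 A xA z) →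
        ∀ v ∈ A, x v = xA v)
    (hagree : ∀ v ∈ A, yB v = xA v) :
    ∀ x : ∀ v, X v,
      (∀ z : ∀ v, X v, augEnergy Ed θ1 θ2 B yB x ≤ augEnergy Ed θ1 θ2 B yB z) →
        ∀ v ∈ A, x v = xA v := by
  intro x hx
  set x' := patch A xA x with hx'def
  have hU : ∑ v ∈ B, θ1 v (x' v) + ∑ v ∈ A, θ1 v (x v)
      = ∑ v ∈ B, θ1 v (x v) + ∑ v ∈ A, θ1 v (x' v) := by
    rw [← Finset.sum_sdiff hAB (f := fun v => θ1 v (x' v)),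
        ← Finset.sum_sdiff hAB (f := fun v => θ1 v (x v))]
    have h1 : ∀ v ∈ B \ A, θ1 v (x' v) = θ1 v (x v) := fun v hv => by
      simp [hx'def, patch, (Finset.mem_sdiff.mp hv).2]
    rw [Finset.sum_congr rfl h1]
    ring
  have hE : ∑ e ∈ Ed, gedge θ2 B yB x' e + ∑ e ∈ Ed, gedge θ2 A xA x e
      ≤ ∑ e ∈ Ed, gedge θ2 B yB x e + ∑ e ∈ Ed, gedge θ2 A xA x' e := by
    rw [← Finset.sum_add_distrib, ← Finset.sum_add_distrib]
    exact Finset.sum_le_sum fun e _ => gedge_key θ2 hAB xA yB x hagree e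
  have key : augEnergy Ed θ1 θ2 B yB x' + augEnergy Ed θ1 θ2 A xA x
      ≤ augEnergy Ed θ1 θ2 B yB x + augEnergy Ed θ1 θ2 A xA x' := by
    rw [augEnergy_eq_gedge, augEnergy_eq_gedge, augEnergy_eq_gedge, augEnergy_eq_gedge]
    linarith
  have h1 : augEnergy Ed θ1 θ2 B yB x ≤ augEnergy Ed θ1 θ2 B yB x' := hx x'
  have h2 : augEnergy Ed θ1 θ2 A xA x' = augEnergy Ed θ1 θ2 A xA xA :=
    augEnergy_patch_self Ed θ1 θ2 A xA x
  exact huniq x fun z => le_trans (by linarith) (hmin z)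

end
end
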